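/- Ellenberg–Venkatesh–Westerland periodicity of component counts: Let G be a finite group and c ⊆ G a conjugacy class whose elements generate G, satisfying the non-splitting property. For r ≥ 1 let N(r) be the number of braid orbits of the Hurwitz action of B_r on the set c^r of all tuples of length r with entries in c. Then there exist a positive integer u and an integer R such that N(r + u) = N(r) for every r ≥ R: the number of components of the Hurwitz spaces Hur_{r,G}(c^r) becomes u-periodic as r gets suitably large. -/

import Mathlib

/-- The elementary braid move `Q_i`: `w` is obtained from `v` by replacing
`(…, g_i, g_{i+1}, …)` with `(…, g_i g_{i+1} g_i⁻¹, g_i, …)`. -/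
def BraidStep {G : Type*} [Group G] {r : ℕ} (v w : Fin r → G) : Prop :=
  ∃ i : ℕ, ∃ h : i + 1 < r,
    w ⟨i, Nat.lt_of_succ_lt h⟩ =
      v ⟨i, Nat.lt_of_succ_lt h⟩ * v ⟨i + 1, h⟩ * (v ⟨i, Nat.lt_of_succ_lt h⟩)⁻¹ ∧
    w ⟨i + 1, h⟩ = v ⟨i, Nat.lt_of_succ_lt h⟩ ∧
    ∀ j : Fin r, j.val ≠ i → j.val ≠ i + 1 → w j = v j

/-- Two tuples are braid-equivalent if they are related by the equivalence relation
generated by the elementary braid moves and their inverses (the Hurwitz action of `B_r`). -/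
def BraidEquiv {G : Type*} [Group G] {r : ℕ} (v w : Fin r → G) : Prop :=
  Relation.EqvGen BraidStep v w
/-- The number of braid orbits of the Hurwitz action of `B_r` on the set `c^r` of all
`r`-tuples with entries in `c`. -/
noncomputable def numBraidOrbits (G : Type*) [Group G] (c : Set G) (r : ℕ) : ℕ :=
  Nat.card (Quot (fun v w : {v : Fin r → G // ∀ i, v i ∈ c} => BraidEquiv v.1 w.1))

/-!
Let `e = |G|`. Appending `e` copies of an element `g_H ∈ c ∩ H`, chosen depending only on the
subgroup `H` generated by the entries, is compatible with braid equivalence, because `H` is a braid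
invariant; so it induces a map from orbits on `c^r` to orbits on `c^(r+e)`. This map is onto for
large `r`. By pigeonhole, a long tuple has some entry `a` at least `3e` times, and these copies can
be gathered at the end. A block `a^e` has trivial product, so it commutes with everything up to
braid equivalence, while pushing an entry `u` through it conjugates it by `u`; hence the block can
be conjugated by any element of `H`, and by non-splitting turned into `g_H^e`. So every long tuple
is equivalent to some `y ++ g_H^e ++ g_H^e`, the image of `y ++ g_H^e`. Thus `N (r + e) ≤ N r` for
large `r`; then the sum of `N` over a window of length `e` eventually stops decreasing, which forces
`N (r + e) = N r`.
-/

theorem Relation.EqvGen.map {α β : Type*} {r : α → α → Prop} {s : β → β → Prop} (f : α → β)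
    (hf : ∀ a b, r a b → s (f a) (f b)) {a b : α} (h : Relation.EqvGen r a b) :
    Relation.EqvGen s (f a) (f b) := by
  induction h with
  | rel _ _ h => exact .rel _ _ (hf _ _ h)
  | refl => exact .refl _
  | symm _ _ _ ih => exact ih.symm
  | trans _ _ _ _ _ ih₁ ih₂ => exact ih₁.trans _ _ _ ih₂

theorem List.exists_le_count_of_card_mul_le {α : Type*} [Fintype α] [Nonempty α] [DecidableEq α]
    {l : List α} {k : ℕ} (h : Fintype.card α * k ≤ l.length) : ∃ a, k ≤ l.count a := by
  obtain ⟨a, -, ha⟩ := Finset.exists_le_of_sum_le (s := Finset.univ) (f := fun _ => k)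
    (g := fun a => l.count a) Finset.univ_nonempty <| by
      simpa [mul_comm] using h.trans
        (Multiset.sum_count_eq_card (s := Finset.univ) (m := (l : Multiset α)) (by simp)).ge
  exact ⟨a, ha⟩

theorem List.getElem?_append_cons_cons_of_ne {α : Type*} (p s : List α) (a b a' b' : α) {n : ℕ}
    (h₁ : n ≠ p.length) (h₂ : n ≠ p.length + 1) :
    (p ++ a :: b :: s)[n]? = (p ++ a' :: b' :: s)[n]? := by
  rcases Nat.lt_or_ge n p.length with hn | hn
  · simp [List.getElem?_append_left hn]
  · obtain ⟨m, rfl⟩ : ∃ m, n = p.length + (m + 2) := ⟨n - p.length - 2, by omega⟩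
    simp [List.getElem?_append_right]

theorem List.eq_take_append_cons_cons_drop {α : Type*} (l : List α) {i : ℕ}
    (h : i + 1 < l.length) :
    l = l.take i ++ l[i] :: l[i + 1] :: l.drop (i + 2) := by
  rw [← List.drop_eq_getElem_cons, ← List.drop_eq_getElem_cons, List.take_append_drop]

open Filter in
theorem Nat.eventually_map_add_eq_of_eventually_map_add_le {f : ℕ → ℕ} {u : ℕ}
    (h : ∀ᶠ r in atTop, f (r + u) ≤ f r) : ∀ᶠ r in atTop, f (r + u) = f r := by
  obtain ⟨R, hR⟩ := eventually_atTop.mp h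
  set S : ℕ → ℕ := fun n => ∑ i ∈ Finset.range u, f (R + n + i)
  have hslide (n : ℕ) : S n + f (R + n + u) = f (R + n) + S (n + 1) := by
    have := (Finset.sum_range_succ (fun i => f (R + n + i)) u).symm.trans
      (Finset.sum_range_succ' (fun i => f (R + n + i)) u)
    simpa [S, add_comm, add_left_comm, add_assoc] using this
  have hS : Antitone S := antitone_nat_of_succ_le fun n => by
    have := hR (R + n) (by omega)
    have := hslide n
    omega
  obtain ⟨N, hN⟩ := WellFoundedLT.antitone_chain_condition hS
  refine eventually_atTop.mpr ⟨R + N, fun r hr => ?_⟩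
  have := hslide (r - R)
  have := (hN (r - R) (by omega)).symm.trans (hN (r - R + 1) (by omega))
  rw [show R + (r - R) = r by omega] at *
  omega

section Hurwitz

variable {G : Type*} [Group G]

def HurwitzMove (l l' : List G) : Prop :=
  ∃ p a b s, l = p ++ a :: b :: s ∧ l' = p ++ (a * b * a⁻¹) :: a :: s

def HurwitzEquiv : List G → List G → Prop := Relation.EqvGen HurwitzMove

namespace HurwitzEquiv

variable {l l' l'' : List G}

theorem refl (l : List G) : HurwitzEquiv l l := Relation.EqvGen.refl l

theorem symm (h : HurwitzEquiv l l') : HurwitzEquiv l' l := Relation.EqvGen.symm _ _ h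

theorem trans (h : HurwitzEquiv l l') (h' : HurwitzEquiv l' l'') : HurwitzEquiv l l'' :=
  Relation.EqvGen.trans _ _ _ h h'

theorem of_move (h : HurwitzMove l l') : HurwitzEquiv l l' := Relation.EqvGen.rel _ _ h

theorem eq_of_move_eq {α : Sort*} (f : List G → α)
    (hf : ∀ l l', HurwitzMove l l' → f l = f l') (h : HurwitzEquiv l l') : f l = f l' := by
  induction h with
  | rel _ _ h => exact hf _ _ h
  | refl => rfl
  | symm _ _ _ ih => exact ih.symm
  | trans _ _ _ _ _ ih₁ ih₂ => exact ih₁.trans ih₂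

theorem length_eq (h : HurwitzEquiv l l') : l.length = l'.length :=
  h.eq_of_move_eq List.length <| by rintro _ _ ⟨p, a, b, s, rfl, rfl⟩; simp

theorem map_conjClasses_eq (h : HurwitzEquiv l l') :
    (l.map ConjClasses.mk : Multiset (ConjClasses G)) = l'.map ConjClasses.mk := by
  refine h.eq_of_move_eq (fun l => (l.map ConjClasses.mk : Multiset (ConjClasses G))) ?_
  rintro _ _ ⟨p, a, b, s, rfl, rfl⟩
  have hb : ConjClasses.mk (a * b * a⁻¹) = ConjClasses.mk b :=
    ConjClasses.mk_eq_mk_iff_isConj.mpr (isConj_iff.mpr ⟨a⁻¹, by group⟩)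
  simpa [hb] using (List.Perm.swap _ _ _).append_left _

theorem forall_mem_of_isConj_closed {c : Set G} (hc : ∀ x y, IsConj x y → x ∈ c → y ∈ c)
    (h : HurwitzEquiv l l') (hl : ∀ x ∈ l, x ∈ c) : ∀ x ∈ l', x ∈ c := by
  intro x hx
  have : ConjClasses.mk x ∈ (l.map ConjClasses.mk : Multiset (ConjClasses G)) := by
    rw [h.map_conjClasses_eq]; simpa using ⟨x, hx, rfl⟩
  obtain ⟨y, hy, hyx⟩ := List.mem_map.mp (Multiset.mem_coe.mp this)
  exact hc y x (ConjClasses.mk_eq_mk_iff_isConj.mp hyx) (hl y hy)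

theorem closure_eq (h : HurwitzEquiv l l') :
    Subgroup.closure {x | x ∈ l} = Subgroup.closure {x | x ∈ l'} := by
  refine h.eq_of_move_eq (fun l => Subgroup.closure {x | x ∈ l}) ?_
  rintro _ _ ⟨p, a, b, s, rfl, rfl⟩
  have mem {l : List G} {x : G} (hx : x ∈ l) : x ∈ Subgroup.closure {x | x ∈ l} :=
    Subgroup.subset_closure hx
  have ha : a ∈ Subgroup.closure {x | x ∈ p ++ (a * b * a⁻¹) :: a :: s} := mem (by simp)
  have hb : a * b * a⁻¹ ∈ Subgroup.closure {x | x ∈ p ++ (a * b * a⁻¹) :: a :: s} :=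
    mem (by simp)
  have ha' : a ∈ Subgroup.closure {x | x ∈ p ++ a :: b :: s} := mem (by simp)
  have hb' : b ∈ Subgroup.closure {x | x ∈ p ++ a :: b :: s} := mem (by simp)
  apply le_antisymm <;> rw [Subgroup.closure_le] <;> intro x hx <;>
    simp only [Set.mem_ofPred_eq, List.mem_append, List.mem_cons] at hx
  · rcases hx with hx | hx | hx | hx
    · exact mem (by simp [hx])
    · exact hx ▸ ha
    · simpa [hx, mul_assoc] using mul_mem (mul_mem (inv_mem ha) hb) ha
    · exact mem (by simp [hx])
  · rcases hx with hx | hx | hx | hx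
    · exact mem (by simp [hx])
    · exact hx ▸ mul_mem (mul_mem ha' hb') (inv_mem ha')
    · exact hx ▸ ha'
    · exact mem (by simp [hx])

theorem append_left (p : List G) (h : HurwitzEquiv l l') :
    HurwitzEquiv (p ++ l) (p ++ l') :=
  Relation.EqvGen.map (p ++ ·)
    (fun _ _ ⟨q, a, b, s, hl, hl'⟩ => ⟨p ++ q, a, b, s, by simp [hl], by simp [hl']⟩) h

theorem append_right (s : List G) (h : HurwitzEquiv l l') :
    HurwitzEquiv (l ++ s) (l' ++ s) :=
  Relation.EqvGen.map (· ++ s)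
    (fun _ _ ⟨p, a, b, t, hl, hl'⟩ => ⟨p, a, b, t ++ s, by simp [hl], by simp [hl']⟩) h

theorem cons_map_conj_append (x : G) (m : List G) :
    HurwitzEquiv (x :: m) (m.map (x * · * x⁻¹) ++ [x]) := by
  induction m with
  | nil => exact .refl _
  | cons b m ih =>
    exact (of_move ⟨[], x, b, m, rfl, rfl⟩).trans (ih.append_left [x * b * x⁻¹])

theorem append_map_conj_append (B m : List G) :
    HurwitzEquiv (B ++ m) (m.map (B.prod * · * B.prod⁻¹) ++ B) := by
  induction B using List.reverseRecOn generalizing m with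
  | nil => simpa using refl m
  | append_singleton B x ih =>
    rw [List.append_assoc]
    refine ((cons_map_conj_append x m).append_left B).trans ?_
    simpa [Function.comp_def, mul_assoc, ← List.append_assoc] using
      (ih (m.map (x * · * x⁻¹))).append_right [x]

theorem append_comm_of_prod_eq_one {B : List G} (hB : B.prod = 1) (m : List G) :
    HurwitzEquiv (B ++ m) (m ++ B) := by
  simpa [hB] using append_map_conj_append B m

instance : Trans (@HurwitzEquiv G _) HurwitzEquiv HurwitzEquiv := ⟨trans⟩

theorem append_replicate_conj {Y : List G} {u b : G} {k : ℕ} (hu : u ∈ Y) (hb : b ^ k = 1) :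
    HurwitzEquiv (Y ++ .replicate k b) (Y ++ .replicate k (u * b * u⁻¹)) := by
  obtain ⟨p, s, rfl⟩ := List.append_of_mem hu
  have hW : (List.replicate k b).prod = 1 := by simp [hb]
  have hW' : (List.replicate k (u * b * u⁻¹)).prod = 1 := by simp [conj_pow, hb]
  calc HurwitzEquiv (p ++ u :: s ++ .replicate k b) (p ++ u :: (.replicate k b ++ s)) := by
        simpa using (append_comm_of_prod_eq_one hW s).symm.append_left (p ++ [u])
    HurwitzEquiv _ (p ++ (.replicate k (u * b * u⁻¹) ++ u :: s)) := by
        simpa using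
          ((cons_map_conj_append u (.replicate k b)).append_right s).append_left p
    HurwitzEquiv _ (p ++ (u :: s ++ .replicate k (u * b * u⁻¹))) :=
        (append_comm_of_prod_eq_one hW' _).append_left p
    _ = (p ++ u :: s ++ .replicate k (u * b * u⁻¹)) := by simp

theorem append_replicate_conj_of_mem_closure {Y : List G} {h : G} {k : ℕ}
    (hh : h ∈ Subgroup.closure {x | x ∈ Y}) {b : G} (hb : b ^ k = 1) :
    HurwitzEquiv (Y ++ .replicate k b) (Y ++ .replicate k (h * b * h⁻¹)) := by
  induction hh using Subgroup.closure_induction generalizing b with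
  | mem u hu => exact append_replicate_conj hu hb
  | one => simpa using refl _
  | mul x y _ _ hx hy =>
    simpa [mul_assoc] using (hy hb).trans (hx (b := y * b * y⁻¹) (by simp [conj_pow, hb]))
  | inv x _ hx =>
    have hb' : (x⁻¹ * b * x) ^ k = 1 := by
      simpa [hb] using conj_pow (a := x⁻¹) (b := b) (i := k)
    simpa [mul_assoc] using (hx hb').symm

theorem exists_append_replicate_of_le_count [DecidableEq G] {a : G} {k : ℕ} {l : List G}
    (hk : k ≤ l.count a) : ∃ y, HurwitzEquiv l (y ++ .replicate k a) := by
  induction k generalizing l with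
  | zero => exact ⟨l, by simpa using refl l⟩
  | succ k ih =>
    obtain ⟨p, s, rfl⟩ := List.append_of_mem (List.count_pos_iff.mp (by omega : 0 < l.count a))
    have hcount : (s.map (a * · * a⁻¹)).count a = s.count a := by
      simpa using List.count_map_of_injective s (a * · * a⁻¹) (fun x y h => by simpa using h) a
    obtain ⟨y, hy⟩ := ih (l := p ++ s.map (a * · * a⁻¹)) <| by
      simp only [List.count_append, hcount]
      simp at hk
      omega
    refine ⟨y, ((cons_map_conj_append a s).append_left p).trans ?_⟩
    simpa [List.replicate_succ'] using hy.append_right [a]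

theorem exists_append_replicate_append_replicate [Finite G] {l : List G} {g : G}
    (hlen : Nat.card G * (3 * Nat.card G) ≤ l.length)
    (hg : ∀ a ∈ l, ∃ h ∈ Subgroup.closure {x | x ∈ l}, h * a * h⁻¹ = g) :
    ∃ y, HurwitzEquiv l (y ++ .replicate (Nat.card G) g ++ .replicate (Nat.card G) g) := by
  classical
  have := Fintype.ofFinite G
  set e := Nat.card G
  have he : e ≠ 0 := Nat.card_pos.ne'
  obtain ⟨a, ha⟩ := l.exists_le_count_of_card_mul_le (k := 3 * e) (by simpa [e] using hlen)
  obtain ⟨y, hy⟩ := exists_append_replicate_of_le_count ha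
  obtain ⟨h, hh, rfl⟩ := hg a (List.count_pos_iff.mp (by omega))
  set Y := y ++ .replicate e a
  have hY : Subgroup.closure {x | x ∈ l} = Subgroup.closure {x | x ∈ Y} := by
    rw [hy.closure_eq]
    congr 1
    ext x
    simp [Y, he]
  have hae : a ^ e = 1 := pow_card_eq_one'
  have hsplit : y ++ .replicate (3 * e) a = Y ++ .replicate e a ++ .replicate e a := by
    simp only [Y, List.append_assoc, ← List.replicate_add]
    congr 2
    omega
  have hY' : Subgroup.closure {x | x ∈ Y} ≤
      Subgroup.closure {x | x ∈ Y ++ .replicate e (h * a * h⁻¹)} :=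
    Subgroup.closure_mono fun x hx => List.mem_append_left _ hx
  refine ⟨Y, ?_⟩
  calc HurwitzEquiv l (Y ++ .replicate e a ++ .replicate e a) := hsplit ▸ hy
    HurwitzEquiv _ (Y ++ .replicate e (h * a * h⁻¹) ++ .replicate e a) :=
      (append_replicate_conj_of_mem_closure (hY.le hh) hae).append_right (.replicate e a)
    HurwitzEquiv _ (Y ++ .replicate e (h * a * h⁻¹) ++ .replicate e (h * a * h⁻¹)) :=
      append_replicate_conj_of_mem_closure (hY' (hY.le hh)) hae

end HurwitzEquiv

theorem braidStep_iff_hurwitzMove {r : ℕ} {v w : Fin r → G} :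
    BraidStep v w ↔ HurwitzMove (List.ofFn v) (List.ofFn w) := by
  constructor
  · rintro ⟨i, hi, h₁, h₂, h₃⟩
    have hlen : i + 1 < (List.ofFn v).length := by simpa using hi
    have htake : (List.ofFn w).take i = (List.ofFn v).take i :=
      List.ext_getElem (by simp) fun n hn _ => by
        simp at hn
        simpa using h₃ ⟨n, by omega⟩ (by simp; omega) (by simp; omega)
    have hdrop : (List.ofFn w).drop (i + 2) = (List.ofFn v).drop (i + 2) :=
      List.ext_getElem (by simp) fun n hn _ => by
        simp at hn
        simpa using h₃ ⟨i + 2 + n, by omega⟩ (by simp; omega) (by simp; omega)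
    refine ⟨_, _, _, _, (List.ofFn v).eq_take_append_cons_cons_drop hlen, ?_⟩
    rw [(List.ofFn w).eq_take_append_cons_cons_drop (by simpa using hlen), htake, hdrop]
    simp [h₁, h₂]
  · rintro ⟨p, a, b, s, hv, hw⟩
    have entry {u : Fin r → G} {l : List G} (hu : List.ofFn u = l) (j : Fin r) :
        some (u j) = l[(j : ℕ)]? := by
      simp [← hu]
    have hr : r = p.length + s.length + 2 := by
      have := congrArg List.length hv
      simp at this
      omega
    have hva : v ⟨p.length, by omega⟩ = a := Option.some_inj.mp (by rw [entry hv]; simp)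
    have hvb : v ⟨p.length + 1, by omega⟩ = b := Option.some_inj.mp (by rw [entry hv]; simp)
    refine ⟨p.length, by omega, ?_, ?_, fun j hj₁ hj₂ => Option.some_inj.mp ?_⟩
    · exact Option.some_inj.mp (by rw [entry hw, hva, hvb]; simp)
    · exact Option.some_inj.mp (by rw [entry hw, hva]; simp)
    · rw [entry hv, entry hw]
      exact List.getElem?_append_cons_cons_of_ne p s _ _ _ _ hj₁ hj₂

theorem braidEquiv_iff_hurwitzEquiv {r : ℕ} {v w : Fin r → G} :
    BraidEquiv v w ↔ HurwitzEquiv (List.ofFn v) (List.ofFn w) := by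
  refine ⟨Relation.EqvGen.map _ fun _ _ h => braidStep_iff_hurwitzMove.mp h, fun h => ?_⟩
  suffices ∀ l l', HurwitzEquiv l l' → ∀ v w : Fin r → G,
      List.ofFn v = l → List.ofFn w = l' → BraidEquiv v w from this _ _ h v w rfl rfl
  intro l l' h
  induction h with
  | rel l l' h => rintro v w rfl rfl; exact .rel _ _ (braidStep_iff_hurwitzMove.mpr h)
  | refl => rintro v w hv hw; exact List.ofFn_injective (hv.trans hw.symm) ▸ .refl _
  | symm _ _ _ ih => exact fun v w hv hw => (ih w v hw hv).symm
  | trans l m l' hlm _ ih₁ ih₂ =>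
    intro v w hv hw
    obtain rfl : m.length = r := by rw [← HurwitzEquiv.length_eq hlm, ← hv, List.length_ofFn]
    exact (ih₁ v _ hv List.ofFn_getElem).trans _ _ _ (ih₂ _ w List.ofFn_getElem hw)

end Hurwitz

section Stabilization

variable {G : Type*} [Group G] {c : Set G} {x₀ : G}

def NonSplitting (c : Set G) : Prop :=
  ∀ H : Subgroup G, ∀ x ∈ c ∩ (H : Set G), ∀ y ∈ c ∩ (H : Set G), ∃ h ∈ H, h * x * h⁻¹ = y

open Classical in
noncomputable def stabilizingElement (c : Set G) (x₀ : G) (H : Subgroup G) : G :=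
  if h : (c ∩ (H : Set G)).Nonempty then h.choose else x₀

theorem stabilizingElement_mem (hx₀ : x₀ ∈ c) (H : Subgroup G) : stabilizingElement c x₀ H ∈ c := by
  unfold stabilizingElement
  split_ifs with h
  exacts [h.choose_spec.1, hx₀]

theorem stabilizingElement_mem_inter {H : Subgroup G} (h : (c ∩ (H : Set G)).Nonempty) :
    stabilizingElement c x₀ H ∈ c ∩ (H : Set G) := by
  simpa [stabilizingElement, h] using h.choose_spec

noncomputable def stabilize (hx₀ : x₀ ∈ c) {r : ℕ} (v : {v : Fin r → G // ∀ i, v i ∈ c}) :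
    {v : Fin (r + Nat.card G) → G // ∀ i, v i ∈ c} :=
  ⟨Fin.append v.1 fun _ => stabilizingElement c x₀ (Subgroup.closure {x | x ∈ List.ofFn v.1}),
    Fin.addCases (by simpa using v.2) fun _ => by simpa using stabilizingElement_mem hx₀ _⟩

theorem ofFn_stabilize (hx₀ : x₀ ∈ c) {r : ℕ} (v : {v : Fin r → G // ∀ i, v i ∈ c}) :
    List.ofFn (stabilize hx₀ v).1 = List.ofFn v.1 ++ .replicate (Nat.card G)
      (stabilizingElement c x₀ (Subgroup.closure {x | x ∈ List.ofFn v.1})) := by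
  simp only [stabilize, List.ofFn_fin_append, List.ofFn_const]

theorem BraidEquiv.stabilize (hx₀ : x₀ ∈ c) {r : ℕ} {v w : {v : Fin r → G // ∀ i, v i ∈ c}}
    (h : BraidEquiv v.1 w.1) : BraidEquiv (stabilize hx₀ v).1 (stabilize hx₀ w).1 := by
  rw [braidEquiv_iff_hurwitzEquiv] at h ⊢
  rw [ofFn_stabilize, ofFn_stabilize, h.closure_eq]
  exact h.append_right _

theorem exists_braidEquiv_stabilize [Finite G] (hx₀ : x₀ ∈ c)
    (hc : ∀ x y, IsConj x y → x ∈ c → y ∈ c)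
    (hnonsplit : NonSplitting c) {r : ℕ} (hr : Nat.card G * (3 * Nat.card G) ≤ r + Nat.card G)
    (w : {v : Fin (r + Nat.card G) → G // ∀ i, v i ∈ c}) :
    ∃ v, BraidEquiv (stabilize hx₀ v).1 w.1 := by
  set l := List.ofFn w.1
  set H := Subgroup.closure {x | x ∈ l}
  set g := stabilizingElement c x₀ H
  have hl : ∀ x ∈ l, x ∈ c := by simpa [l] using w.2
  have hlH : ∀ x ∈ l, x ∈ H := fun x hx => Subgroup.subset_closure hx
  have hg : g ∈ c ∩ (H : Set G) := by
    obtain ⟨x, hx⟩ := List.exists_mem_of_length_pos (l := l) (by simp [l])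
    exact stabilizingElement_mem_inter ⟨x, hl x hx, hlH x hx⟩
  obtain ⟨L, hL⟩ := HurwitzEquiv.exists_append_replicate_append_replicate (l := l) (g := g)
    (by simpa [l] using hr) fun a ha => hnonsplit H a ⟨hl a ha, hlH a ha⟩ g hg
  set M := L ++ .replicate (Nat.card G) g
  have hM_length : M.length = r := by
    have := hL.length_eq
    simp only [l, M, List.length_append, List.length_ofFn, List.length_replicate] at this ⊢
    omega
  have hM_mem : ∀ x ∈ M, x ∈ c := fun x hx =>
    hL.forall_mem_of_isConj_closed hc hl x (List.mem_append_left _ hx)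
  have hM_closure : Subgroup.closure {x | x ∈ M} = H := by
    refine Eq.trans ?_ hL.closure_eq.symm
    congr 1
    ext x
    simp [M]
  let v : {v : Fin r → G // ∀ i, v i ∈ c} :=
    ⟨fun i => M[i.1], fun i => hM_mem _ (List.getElem_mem _)⟩
  have hv : List.ofFn v.1 = M := List.ext_getElem (by simp [hM_length]) fun _ _ _ => by simp [v]
  refine ⟨v, braidEquiv_iff_hurwitzEquiv.mpr ?_⟩
  rw [ofFn_stabilize, hv, hM_closure]
  exact hL.symm

theorem numBraidOrbits_add_card_le [Finite G] (hx₀ : x₀ ∈ c)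
    (hc : ∀ x y, IsConj x y → x ∈ c → y ∈ c)
    (hnonsplit : NonSplitting c) {r : ℕ} (hr : Nat.card G * (3 * Nat.card G) ≤ r + Nat.card G) :
    numBraidOrbits G c (r + Nat.card G) ≤ numBraidOrbits G c r :=
  Nat.card_le_card_of_surjective
    (Quot.lift (fun v => Quot.mk _ (stabilize hx₀ v)) fun _ _ h => Quot.sound (h.stabilize hx₀))
    (Quot.ind fun w =>
      let ⟨v, hv⟩ := exists_braidEquiv_stabilize hx₀ hc hnonsplit hr w
      ⟨Quot.mk _ v, Quot.sound hv⟩)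

end Stabilization

theorem evw_periodicity_general {G : Type*} [Group G] [Finite G] (c : Set G)
    (hconj : ∃ x : G, c = {y | IsConj x y})
    (hnonsplit : ∀ H : Subgroup G, (c ∩ (H : Set G)).Nonempty →
      ∀ x ∈ c ∩ (H : Set G), ∀ y ∈ c ∩ (H : Set G), ∃ h ∈ H, h * x * h⁻¹ = y) :
    ∃ u : ℕ, 0 < u ∧ ∃ R : ℕ, ∀ r : ℕ, R ≤ r →
      numBraidOrbits G c (r + u) = numBraidOrbits G c r := by
  obtain ⟨x₀, rfl⟩ := hconj
  have hclosed (x y : G) (hxy : IsConj x y) (hx : IsConj x₀ x) : IsConj x₀ y := hx.trans hxy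
  have hsplit : NonSplitting {y | IsConj x₀ y} := fun H x hx => hnonsplit H ⟨x, hx⟩ x hx
  refine ⟨Nat.card G, Nat.card_pos, Filter.eventually_atTop.mp ?_⟩
  refine Nat.eventually_map_add_eq_of_eventually_map_add_le <| Filter.eventually_atTop.mpr
    ⟨Nat.card G * (3 * Nat.card G), fun r hr => ?_⟩
  exact numBraidOrbits_add_card_le (c := {y | IsConj x₀ y}) (IsConj.refl x₀) hclosed hsplit
    (by omega)

/-- Ellenberg–Venkatesh–Westerland periodicity: if the generating conjugacy class `c`
satisfies the non-splitting property, then the number of braid orbits on `c^r` becomes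
periodic as `r` gets suitably large. -/
theorem evw_periodicity {G : Type*} [Group G] [Finite G] (c : Set G)
    (hconj : ∃ x : G, c = {y | IsConj x y})
    (hgen : Subgroup.closure c = ⊤)
    (hnonsplit : ∀ H : Subgroup G, (c ∩ (H : Set G)).Nonempty →
      ∀ x ∈ c ∩ (H : Set G), ∀ y ∈ c ∩ (H : Set G), ∃ h ∈ H, h * x * h⁻¹ = y) :
    ∃ u : ℕ, 0 < u ∧ ∃ R : ℕ, ∀ r : ℕ, R ≤ r →
      numBraidOrbits G c (r + u) = numBraidOrbits G c r :=
  evw_periodicity_general c hconj hnonsplit
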